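/- arXiv:1609.08502 — 2 statements merged into one kernel-verified Lean document; each statement's English description precedes it below -/
import Mathlib

section
/- Let a sequence of nonnegative numbers satisfy e_{k+1} ≤ (M/(2μ̄)) e_k² + (σ/(μ̄√{s_k})) e_k + v/(μ̄ √{x_k}), where s_k → ∞ is nondecreasing with s_0 ≥ (4σ/μ̄)², x_k ≥ x_0 η_k^k with x_0 ≥ (6vM γ/μ̄²)² (take γ = 1 for a deterministic sequence), η_k strictly increasing with η_1 > 1 and η_k → ∞, and e_0 ≤ μ̄/(3M). Then e_k → 0 R-superlinearly: there exist τ_k > 0 with e_k ≤ (μ̄/(3M))τ_k and τ_{k+1}/τ_k → 0. -/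
open Filter

noncomputable def stmt9rho (σ μb : ℝ) (s η : ℕ → ℝ) (t : ℝ) (k : ℕ) : ℝ :=
  t / 6 + σ / (μb * Real.sqrt (s k)) + 1 / 2 * η k ^ (-(k : ℝ) / 4)

noncomputable def stmt9tau (σ μb : ℝ) (s η : ℕ → ℝ) : ℕ → ℝ
  | 0 => 1
  | k + 1 => max (stmt9tau σ μb s η k * stmt9rho σ μb s η (stmt9tau σ μb s η k) k)
      (η (k + 1) ^ (-((k : ℝ) + 1) / 4))

theorem stmt_9 (M μb σ v : ℝ) (hM : 0 < M) (hμ : 0 < μb) (hσ : 0 < σ) (hv : 0 < v)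
    (e s x η : ℕ → ℝ)
    (he : ∀ k, 0 ≤ e k)
    (hs_pos : ∀ k, 0 < s k) (hs_mono : Monotone s)
    (hs_tend : Tendsto s atTop atTop)
    (hs0 : (4 * σ / μb) ^ 2 ≤ s 0)
    (hx : ∀ k, x 0 * η k ^ k ≤ x k) (hx0 : (6 * v * M / μb ^ 2) ^ 2 ≤ x 0)
    (hη_mono : StrictMono η) (hη1 : 1 < η 1)
    (hη_tend : Tendsto η atTop atTop)
    (he0 : e 0 ≤ μb / (3 * M))
    (hrec : ∀ k, e (k + 1) ≤ M / (2 * μb) * e k ^ 2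
        + σ / (μb * Real.sqrt (s k)) * e k + v / (μb * Real.sqrt (x k))) :
    ∃ τ : ℕ → ℝ, (∀ k, 0 < τ k) ∧ (∀ k, e k ≤ μb / (3 * M) * τ k) ∧
      Tendsto (fun k => τ (k + 1) / τ k) atTop (nhds 0) := by
  set C : ℝ := μb / (3 * M) with hC
  have hCpos : 0 < C := by positivity
  set τ : ℕ → ℝ := stmt9tau σ μb s η with hτdef
  set ρ : ℕ → ℝ := fun k => stmt9rho σ μb s η (τ k) k with hρdef
  have hτsucc : ∀ k, τ (k + 1) = max (τ k * ρ k) (η (k + 1) ^ (-((k : ℝ) + 1) / 4)) := by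
    intro k; rfl
  have hτ0' : τ 0 = 1 := rfl
  -- η is > 1 for k ≥ 1
  have hη_ge : ∀ k, 1 ≤ k → 1 < η k := fun k hk => lt_of_lt_of_le hη1 (hη_mono.monotone hk)
  have hexp_nonpos : ∀ k : ℕ, (-(k : ℝ) / 4) ≤ 0 := by
    intro k
    have : (0 : ℝ) ≤ (k : ℝ) := Nat.cast_nonneg k
    linarith
  -- values of the rpow terms
  have hpow_nonneg : ∀ k : ℕ, 0 ≤ η k ^ (-(k : ℝ) / 4) := by
    intro k
    cases k with
    | zero => norm_num
    | succ n =>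
        exact (Real.rpow_pos_of_pos (lt_trans one_pos (hη_ge _ (Nat.succ_le_succ n.zero_le))) _).le
  have hpow_le_one : ∀ k : ℕ, η k ^ (-(k : ℝ) / 4) ≤ 1 := by
    intro k
    cases k with
    | zero => norm_num
    | succ n =>
        exact Real.rpow_le_one_of_one_le_of_nonpos (hη_ge _ (Nat.succ_le_succ n.zero_le)).le
          (hexp_nonpos _)
  have hpow_pos' : ∀ k : ℕ, 0 < η (k + 1) ^ (-((k : ℝ) + 1) / 4) := by
    intro k
    exact Real.rpow_pos_of_pos (lt_trans one_pos (hη_ge _ (Nat.succ_le_succ k.zero_le))) _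
  -- positivity of τ
  have hτpos : ∀ k, 0 < τ k := by
    intro k
    cases k with
    | zero => norm_num [hτ0']
    | succ n => exact lt_of_lt_of_le (hpow_pos' n) (by rw [hτsucc]; exact le_max_right _ _)
  -- τ dominates the rpow sequence
  have hτ_ge : ∀ k, η k ^ (-(k : ℝ) / 4) ≤ τ k := by
    intro k
    cases k with
    | zero => norm_num [hτ0']
    | succ n =>
        rw [hτsucc]
        refine le_trans (le_of_eq ?_) (le_max_right _ _)
        congr 1
        push_cast
        ring
  -- bound on the sampling term
  have hsqrt_s : ∀ k, 4 * σ / μb ≤ Real.sqrt (s k) := by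
    intro k
    have h1 : (4 * σ / μb) ^ 2 ≤ s k := le_trans hs0 (hs_mono (Nat.zero_le k))
    have h2 := Real.sqrt_le_sqrt h1
    rwa [Real.sqrt_sq (by positivity)] at h2
  have hr_nonneg : ∀ k, 0 ≤ σ / (μb * Real.sqrt (s k)) := by
    intro k
    have : 0 < Real.sqrt (s k) := Real.sqrt_pos.mpr (hs_pos k)
    positivity
  have hr_le : ∀ k, σ / (μb * Real.sqrt (s k)) ≤ 1 / 4 := by
    intro k
    have h1 := hsqrt_s k
    have h2 : 4 * σ ≤ μb * Real.sqrt (s k) := by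
      rw [div_le_iff₀ hμ] at h1; linarith
    have hpos : 0 < μb * Real.sqrt (s k) := by
      have : 0 < Real.sqrt (s k) := Real.sqrt_pos.mpr (hs_pos k)
      positivity
    rw [div_le_iff₀ hpos]
    linarith
  -- ρ is nonnegative and small
  have hρ_nonneg : ∀ k, 0 ≤ ρ k := by
    intro k
    have h1 := hpow_nonneg k
    have h2 := hr_nonneg k
    have h3 := (hτpos k).le
    simp only [hρdef, stmt9rho]
    positivity
  -- τ ≤ 1
  have hτ_le_one : ∀ k, τ k ≤ 1 := by
    intro k
    induction k with
    | zero => norm_num [hτ0']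
    | succ n ih =>
        rw [hτsucc]
        refine max_le ?_ ?_
        · have hρ1 : ρ n ≤ 1 := by
            simp only [hρdef, stmt9rho]
            have := hr_le n
            have := hpow_le_one n
            linarith
          calc τ n * ρ n ≤ 1 * 1 :=
                mul_le_mul ih hρ1 (hρ_nonneg n) zero_le_one
          _ = 1 := by norm_num
        · refine Real.rpow_le_one_of_one_le_of_nonpos
            (hη_ge _ (Nat.succ_le_succ n.zero_le)).le ?_
          have : (0 : ℝ) ≤ (n : ℝ) := Nat.cast_nonneg n
          linarith
  have hρ_le : ∀ k, ρ k ≤ 11 / 12 := by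
    intro k
    simp only [hρdef, stmt9rho]
    have := hr_le k
    have := hpow_le_one k
    have := hτ_le_one k
    linarith
  -- properties of the auxiliary powers P = η^(-k/4), Q = η^(k/2)
  have hQpos : ∀ k : ℕ, 0 < η k ^ ((k : ℝ) / 2) := by
    intro k
    cases k with
    | zero => norm_num
    | succ n =>
        exact Real.rpow_pos_of_pos (lt_trans one_pos (hη_ge _ (Nat.succ_le_succ n.zero_le))) _
  have hPPQ : ∀ k : ℕ,
      η k ^ (-(k : ℝ) / 4) * η k ^ (-(k : ℝ) / 4) * η k ^ ((k : ℝ) / 2) = 1 := by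
    intro k
    cases k with
    | zero => norm_num
    | succ n =>
        have hηp : 0 < η (n + 1) := lt_trans one_pos (hη_ge _ (Nat.succ_le_succ n.zero_le))
        rw [← Real.rpow_add hηp, ← Real.rpow_add hηp]
        rw [show -((n + 1 : ℕ) : ℝ) / 4 + -((n + 1 : ℕ) : ℝ) / 4 + ((n + 1 : ℕ) : ℝ) / 2
            = 0 by push_cast; ring]
        exact Real.rpow_zero _
  -- bound on the x-term
  have hsqrt_x : ∀ k, 6 * v * M / μb ^ 2 * η k ^ ((k : ℝ) / 2) ≤ Real.sqrt (x k) := by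
    intro k
    cases k with
    | zero =>
        have h2 := Real.sqrt_le_sqrt hx0
        rw [Real.sqrt_sq (by positivity)] at h2
        simpa using h2
    | succ n =>
        have hηp : 0 < η (n + 1) := lt_trans one_pos (hη_ge _ (Nat.succ_le_succ n.zero_le))
        have hpowpos : (0 : ℝ) < η (n + 1) ^ (n + 1 : ℕ) := pow_pos hηp _
        have h1 : (6 * v * M / μb ^ 2) ^ 2 * η (n + 1) ^ (n + 1 : ℕ) ≤ x (n + 1) := by
          calc (6 * v * M / μb ^ 2) ^ 2 * η (n + 1) ^ (n + 1 : ℕ)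
              ≤ x 0 * η (n + 1) ^ (n + 1 : ℕ) :=
                mul_le_mul_of_nonneg_right hx0 hpowpos.le
          _ ≤ x (n + 1) := hx (n + 1)
        have h2 := Real.sqrt_le_sqrt h1
        rw [Real.sqrt_mul (by positivity)] at h2
        rw [Real.sqrt_sq (by positivity)] at h2
        have h3 : Real.sqrt (η (n + 1) ^ (n + 1 : ℕ))
            = η (n + 1) ^ (((n + 1 : ℕ) : ℝ) / 2) := by
          rw [show (η (n + 1) : ℝ) ^ (n + 1 : ℕ)
              = (η (n + 1) ^ (((n + 1 : ℕ) : ℝ) / 2)) ^ 2 by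
            rw [sq, ← Real.rpow_add hηp]
            rw [show ((n + 1 : ℕ) : ℝ) / 2 + ((n + 1 : ℕ) : ℝ) / 2 = ((n + 1 : ℕ) : ℝ) by ring]
            exact (Real.rpow_natCast _ _).symm]
          exact Real.sqrt_sq (Real.rpow_pos_of_pos hηp _).le
        rw [h3] at h2
        exact h2
  have hx_term : ∀ k, v / (μb * Real.sqrt (x k))
      ≤ C * (1 / 2 * η k ^ (-(k : ℝ) / 4)) * η k ^ (-(k : ℝ) / 4) := by
    intro k
    have hPpos : 0 < η k ^ (-(k : ℝ) / 4) := by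
      cases k with
      | zero => norm_num
      | succ n =>
          exact Real.rpow_pos_of_pos (lt_trans one_pos (hη_ge _ (Nat.succ_le_succ n.zero_le))) _
    have hQp := hQpos k
    have hB := hsqrt_x k
    have hBpos : 0 < 6 * v * M / μb ^ 2 * η k ^ ((k : ℝ) / 2) := by positivity
    have hxpos : 0 < Real.sqrt (x k) := lt_of_lt_of_le hBpos hB
    have hpos' : 0 < μb * Real.sqrt (x k) := by positivity
    rw [div_le_iff₀ hpos']
    have hfac : 0 ≤ C * (1 / 2 * η k ^ (-(k : ℝ) / 4)) * η k ^ (-(k : ℝ) / 4) := by positivity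
    have h7 : C * (1 / 2 * η k ^ (-(k : ℝ) / 4)) * η k ^ (-(k : ℝ) / 4)
          * (μb * (6 * v * M / μb ^ 2 * η k ^ ((k : ℝ) / 2)))
        ≤ C * (1 / 2 * η k ^ (-(k : ℝ) / 4)) * η k ^ (-(k : ℝ) / 4)
          * (μb * Real.sqrt (x k)) :=
      mul_le_mul_of_nonneg_left (mul_le_mul_of_nonneg_left hB hμ.le) hfac
    have h6 : C * (1 / 2 * η k ^ (-(k : ℝ) / 4)) * η k ^ (-(k : ℝ) / 4)
          * (μb * (6 * v * M / μb ^ 2 * η k ^ ((k : ℝ) / 2)))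
        = v * (η k ^ (-(k : ℝ) / 4) * η k ^ (-(k : ℝ) / 4) * η k ^ ((k : ℝ) / 2)) := by
      rw [hC]; field_simp; ring
    rw [h6, hPPQ k, mul_one] at h7
    linarith
  -- the main error bound
  have hD : ∀ k, e k ≤ C * τ k := by
    intro k
    induction k with
    | zero => simpa [hτ0'] using he0
    | succ n ih =>
        have h1 := hrec n
        have hsq : e n ^ 2 ≤ (C * τ n) ^ 2 := by
          have := he n
          nlinarith [hτpos n, hCpos]
        have t1 : M / (2 * μb) * e n ^ 2 ≤ C * (τ n * (τ n / 6)) := by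
          have h2 : M / (2 * μb) * e n ^ 2 ≤ M / (2 * μb) * (C * τ n) ^ 2 :=
            mul_le_mul_of_nonneg_left hsq (by positivity)
          refine le_trans h2 (le_of_eq ?_)
          rw [hC]; field_simp; ring
        have t2 : σ / (μb * Real.sqrt (s n)) * e n
            ≤ C * (τ n * (σ / (μb * Real.sqrt (s n)))) := by
          calc σ / (μb * Real.sqrt (s n)) * e n
              ≤ σ / (μb * Real.sqrt (s n)) * (C * τ n) :=
                mul_le_mul_of_nonneg_left ih (hr_nonneg n)
          _ = C * (τ n * (σ / (μb * Real.sqrt (s n)))) := by ring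
        have t3 : v / (μb * Real.sqrt (x n))
            ≤ C * (τ n * (1 / 2 * η n ^ (-(n : ℝ) / 4))) := by
          refine le_trans (hx_term n) ?_
          have h4 := hτ_ge n
          have h5 : 0 ≤ C * (1 / 2 * η n ^ (-(n : ℝ) / 4)) := by
            have := hpow_nonneg n; positivity
          calc C * (1 / 2 * η n ^ (-(n : ℝ) / 4)) * η n ^ (-(n : ℝ) / 4)
              ≤ C * (1 / 2 * η n ^ (-(n : ℝ) / 4)) * τ n := mul_le_mul_of_nonneg_left h4 h5
          _ = C * (τ n * (1 / 2 * η n ^ (-(n : ℝ) / 4))) := by ring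
        have hmain : e (n + 1) ≤ C * (τ n * ρ n) := by
          have hρeq : C * (τ n * ρ n) = C * (τ n * (τ n / 6))
              + C * (τ n * (σ / (μb * Real.sqrt (s n))))
              + C * (τ n * (1 / 2 * η n ^ (-(n : ℝ) / 4))) := by
            simp only [hρdef, stmt9rho]; ring
          rw [hρeq]
          linarith
        refine le_trans hmain ?_
        rw [hτsucc]
        exact mul_le_mul_of_nonneg_left (le_max_left _ _) hCpos.le
  -- geometric decay of τ
  set q : ℝ := max (11 / 12 : ℝ) (η 1 ^ (-(1 / 4) : ℝ)) with hq
  have hq0 : (0 : ℝ) < q := lt_of_lt_of_le (by norm_num) (le_max_left _ _)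
  have hq1 : q < 1 := by
    apply max_lt (by norm_num)
    exact Real.rpow_lt_one_of_one_lt_of_neg hη1 (by norm_num)
  have hstep2 : ∀ n : ℕ, 1 ≤ n →
      η (n + 1) ^ (-((n : ℝ) + 1) / 4) ≤ τ n * η (n + 1) ^ (-(1 / 4) : ℝ) := by
    intro n hn
    have hηn : 1 < η n := hη_ge n hn
    have hηn1 : 0 < η (n + 1) := lt_trans one_pos (hη_ge _ (Nat.succ_le_succ n.zero_le))
    have hsplit : η (n + 1) ^ (-((n : ℝ) + 1) / 4)
        = η (n + 1) ^ (-(n : ℝ) / 4) * η (n + 1) ^ (-(1 / 4) : ℝ) := by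
      rw [← Real.rpow_add hηn1]
      congr 1
      ring
    rw [hsplit]
    have hbase : η (n + 1) ^ (-(n : ℝ) / 4) ≤ η n ^ (-(n : ℝ) / 4) :=
      Real.rpow_le_rpow_of_nonpos (lt_trans one_pos hηn) (hη_mono (Nat.lt_succ_self n)).le
        (hexp_nonpos n)
    have h1 : η (n + 1) ^ (-(n : ℝ) / 4) ≤ τ n := le_trans hbase (hτ_ge n)
    exact mul_le_mul_of_nonneg_right h1 (Real.rpow_pos_of_pos hηn1 _).le
  have hgeo : ∀ n, τ (n + 1) ≤ q * τ n := by
    intro n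
    rw [hτsucc]
    refine max_le ?_ ?_
    · calc τ n * ρ n ≤ τ n * (11 / 12) := mul_le_mul_of_nonneg_left (hρ_le n) (hτpos n).le
      _ ≤ τ n * q := mul_le_mul_of_nonneg_left (le_max_left _ _) (hτpos n).le
      _ = q * τ n := by ring
    · cases n with
      | zero =>
          calc η (0 + 1) ^ (-((0 : ℕ) + 1 : ℝ) / 4) = η 1 ^ (-(1 / 4) : ℝ) := by norm_num
          _ ≤ q := le_max_right _ _
          _ = q * τ 0 := by rw [hτ0']; ring
      | succ m =>
          refine le_trans (hstep2 (m + 1) (Nat.succ_le_succ m.zero_le)) ?_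
          have h1 : η (m + 1 + 1) ^ (-(1 / 4) : ℝ) ≤ η 1 ^ (-(1 / 4) : ℝ) :=
            Real.rpow_le_rpow_of_nonpos (lt_trans one_pos hη1)
              (hη_mono.monotone (by omega)) (by norm_num)
          have h2 : η (m + 1 + 1) ^ (-(1 / 4) : ℝ) ≤ q := le_trans h1 (le_max_right _ _)
          calc τ (m + 1) * η (m + 1 + 1) ^ (-(1 / 4) : ℝ) ≤ τ (m + 1) * q :=
              mul_le_mul_of_nonneg_left h2 (hτpos _).le
          _ = q * τ (m + 1) := by ring
  have hτ_geom : ∀ n, τ n ≤ q ^ n := by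
    intro n
    induction n with
    | zero => simp [hτ0']
    | succ m ih =>
        calc τ (m + 1) ≤ q * τ m := hgeo m
        _ ≤ q * q ^ m := mul_le_mul_of_nonneg_left ih hq0.le
        _ = q ^ (m + 1) := by ring
  have hτ_tend : Tendsto τ atTop (nhds 0) := by
    apply squeeze_zero (fun n => (hτpos n).le) hτ_geom
    exact tendsto_pow_atTop_nhds_zero_of_lt_one hq0.le hq1
  -- the sampling term tends to 0
  have hsqrt_tend : Tendsto (fun k => Real.sqrt (s k)) atTop atTop := by
    rw [tendsto_atTop_atTop]
    intro b
    obtain ⟨N, hN⟩ := tendsto_atTop_atTop.mp hs_tend (b ^ 2)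
    refine ⟨N, fun n hn => ?_⟩
    have h1 := hN n hn
    calc b ≤ |b| := le_abs_self b
    _ = Real.sqrt (b ^ 2) := (Real.sqrt_sq_eq_abs b).symm
    _ ≤ Real.sqrt (s n) := Real.sqrt_le_sqrt h1
  have hr_tend : Tendsto (fun k => σ / (μb * Real.sqrt (s k))) atTop (nhds 0) :=
    Tendsto.div_atTop tendsto_const_nhds (hsqrt_tend.const_mul_atTop hμ)
  -- the power term tends to 0
  have hpow_tend : Tendsto (fun k : ℕ => η k ^ (-(k : ℝ) / 4)) atTop (nhds 0) := by
    have hr01 : 0 ≤ η 1 ^ (-(1 / 4) : ℝ) := (Real.rpow_pos_of_pos (lt_trans one_pos hη1) _).le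
    have hr11 : η 1 ^ (-(1 / 4) : ℝ) < 1 :=
      Real.rpow_lt_one_of_one_lt_of_neg hη1 (by norm_num)
    refine squeeze_zero' (Eventually.of_forall (fun k => hpow_nonneg k)) ?_
      (tendsto_pow_atTop_nhds_zero_of_lt_one hr01 hr11)
    · filter_upwards [eventually_ge_atTop 1] with k hk
      have hηk : 1 < η k := hη_ge k hk
      have h1 : η k ^ (-(k : ℝ) / 4) ≤ η 1 ^ (-(k : ℝ) / 4) :=
        Real.rpow_le_rpow_of_nonpos (lt_trans one_pos hη1) (hη_mono.monotone hk)
          (hexp_nonpos k)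
      have h2 : η 1 ^ (-(k : ℝ) / 4) = (η 1 ^ (-(1 / 4) : ℝ)) ^ k := by
        rw [← Real.rpow_natCast (η 1 ^ (-(1 / 4) : ℝ)) k,
          ← Real.rpow_mul (lt_trans one_pos hη1).le]
        congr 1
        ring
      rw [h2] at h1
      exact h1
  have hρ_tend : Tendsto ρ atTop (nhds 0) := by
    simp only [hρdef, stmt9rho]
    simpa using ((hτ_tend.div_const 6).add hr_tend).add (hpow_tend.const_mul (2⁻¹ : ℝ))
  have hq2_tend : Tendsto (fun k : ℕ => η (k + 1) ^ (-(1 / 4) : ℝ)) atTop (nhds 0) := by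
    have h1 : Tendsto (fun k : ℕ => η (k + 1)) atTop atTop :=
      hη_tend.comp (tendsto_add_atTop_nat 1)
    have h2 := (tendsto_rpow_neg_atTop (by norm_num : (0 : ℝ) < 1 / 4)).comp h1
    exact h2
  have hmax_tend : Tendsto (fun k => max (ρ k) (η (k + 1) ^ (-(1 / 4) : ℝ)))
      atTop (nhds 0) := by
    have := hρ_tend.max hq2_tend
    simpa using this
  -- the ratio bound
  have hratio : Tendsto (fun k => τ (k + 1) / τ k) atTop (nhds 0) := by
    refine squeeze_zero'
      (Eventually.of_forall (fun k => div_nonneg (hτpos (k + 1)).le (hτpos k).le)) ?_ hmax_tend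
    · filter_upwards [eventually_ge_atTop 1] with k hk
      rw [div_le_iff₀ (hτpos k)]
      rw [hτsucc]
      refine max_le ?_ ?_
      · calc τ k * ρ k ≤ τ k * max (ρ k) (η (k + 1) ^ (-(1 / 4) : ℝ)) :=
            mul_le_mul_of_nonneg_left (le_max_left _ _) (hτpos k).le
        _ = max (ρ k) (η (k + 1) ^ (-(1 / 4) : ℝ)) * τ k := by ring
      · refine le_trans (hstep2 k hk) ?_
        calc τ k * η (k + 1) ^ (-(1 / 4) : ℝ)
            ≤ τ k * max (ρ k) (η (k + 1) ^ (-(1 / 4) : ℝ)) :=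
              mul_le_mul_of_nonneg_left (le_max_right _ _) (hτpos k).le
        _ = max (ρ k) (η (k + 1) ^ (-(1 / 4) : ℝ)) * τ k := by ring
  exact ⟨τ, hτpos, hD, hratio⟩
end

section
/- Let F be twice continuously differentiable with M-Lipschitz Hessian, μI ⪯ ∇²F ⪯ LI, minimizer w*. Let H be symmetric with μ_β I ⪯ H ⪯ L_β I, and let p satisfy ‖Hp + ∇F(w)‖ ≤ ζ‖∇F(w)‖. Then the step w⁺ = w + p satisfies ‖w⁺ − w*‖ ≤ (M/(2μ_β))‖w−w*‖² + (1/μ_β)‖(H − ∇²F(w))(w−w*)‖ + (ζL/μ_β)‖w−w*‖. -/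
/-!
Since `∇F(w*) = 0`, the vector `H (w⁺ - w*)` splits as the residual `H p + ∇F(w)`, the Hessian
mismatch `(H - ∇²F(w)) (w - w*)`, and the Taylor remainder `∇²F(w) (w - w*) - ∇F(w) + ∇F(w*)`.
The Lipschitz Hessian bounds the remainder by `M/2 ‖w - w*‖²`; the Hessian is symmetric, so
`∇²F ⪯ L` bounds its operator norm by `L` and hence the residual by `ζ L ‖w - w*‖`.
Finally `H ⪰ μ_β` gives `μ_β ‖w⁺ - w*‖ ≤ ‖H (w⁺ - w*)‖`.
-/

open scoped RealInnerProductSpace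

section Normed

variable {E F : Type*} [NormedAddCommGroup E] [NormedSpace ℝ E]
  [NormedAddCommGroup F] [NormedSpace ℝ F]

theorem norm_sub_sub_fderiv_le_of_lipschitz {G : E → F} {G' : E → E →L[ℝ] F} {M : ℝ} {a : E}
    (hG : ∀ x, HasFDerivAt G (G' x) x) (hLip : ∀ x, ‖G' x - G' a‖ ≤ M * ‖x - a‖) (b : E) :
    ‖G b - G a - G' a (b - a)‖ ≤ M / 2 * ‖b - a‖ ^ 2 := by
  set u := b - a
  -- `f` is the first-order Taylor remainder along the segment from `a` to `b`.
  let f : ℝ → F := fun t ↦ G (a + t • u) - t • G' a u - G a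
  have hf : ∀ t : ℝ, HasDerivAt f (G' (a + t • u) u - G' a u) t := fun t ↦ by
    have hline : HasDerivAt (fun s : ℝ ↦ a + s • u) u t := by
      simpa using ((hasDerivAt_id t).smul_const u).const_add a
    have := (((hG _).comp_hasDerivAt t hline).sub
      ((hasDerivAt_id' t).smul_const (G' a u))).sub_const (G a)
    rwa [one_smul] at this
  have hB : ∀ t : ℝ, HasDerivAt (fun t ↦ M / 2 * ‖u‖ ^ 2 * t ^ 2) (M * ‖u‖ ^ 2 * t) t := fun t ↦ by
    refine ((hasDerivAt_pow 2 t).const_mul (M / 2 * ‖u‖ ^ 2)).congr_deriv ?_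
    norm_num
    ring
  have hbound : ∀ t ∈ Set.Ico (0 : ℝ) 1, ‖G' (a + t • u) u - G' a u‖ ≤ M * ‖u‖ ^ 2 * t := by
    rintro t ⟨ht, -⟩
    calc ‖G' (a + t • u) u - G' a u‖ = ‖(G' (a + t • u) - G' a) u‖ := rfl
      _ ≤ M * ‖a + t • u - a‖ * ‖u‖ :=
        (ContinuousLinearMap.le_opNorm _ _).trans (by gcongr; exact hLip _)
      _ = M * ‖u‖ ^ 2 * t := by
        rw [add_sub_cancel_left, norm_smul, Real.norm_of_nonneg ht]; ring
  have key := image_norm_le_of_norm_deriv_right_le_deriv_boundary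
    (fun t _ ↦ (hf t).continuousAt.continuousWithinAt) (fun t _ ↦ (hf t).hasDerivWithinAt)
    (by simp [f]) hB hbound (Set.right_mem_Icc.2 zero_le_one)
  simpa [f, u, sub_right_comm] using key

end Normed

section InnerProduct

variable {E : Type*} [NormedAddCommGroup E] [InnerProductSpace ℝ E]

theorem ContinuousLinearMap.opNorm_le_of_abs_inner_le {T : E →L[ℝ] E}
    (hT : (T : E →ₗ[ℝ] E).IsSymmetric) {r : ℝ} (hr : 0 ≤ r)
    (h : ∀ x, |⟪T x, x⟫| ≤ r * ‖x‖ ^ 2) : ‖T‖ ≤ r := by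
  rw [T.norm_eq_iSup_rayleighQuotient hT]
  refine ciSup_le fun x ↦ ?_
  rcases eq_or_ne x 0 with rfl | hx
  · simpa using hr
  rw [rayleighQuotient, reApplyInnerSelf_apply, abs_div, abs_sq,
    div_le_iff₀ (by positivity)]
  simpa using h x

theorem ContinuousLinearMap.opNorm_le_of_inner_le {A : E →L[ℝ] E}
    (hA : (A : E →ₗ[ℝ] E).IsSymmetric) {μ L : ℝ} (hμ : 0 ≤ μ) (hμL : μ ≤ L)
    (h : ∀ v, μ * ‖v‖ ^ 2 ≤ ⟪A v, v⟫ ∧ ⟪A v, v⟫ ≤ L * ‖v‖ ^ 2) : ‖A‖ ≤ L := by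
  -- Shifting by the midpoint of `[μ, L]` makes the quadratic form small in absolute value.
  set T := A - ((L + μ) / 2) • ContinuousLinearMap.id ℝ E
  have hT : (T : E →ₗ[ℝ] E).IsSymmetric := fun x y ↦ by
    simp [T, inner_sub_left, inner_sub_right, real_inner_smul_left, real_inner_smul_right,
      hA.apply_clm x y]
  have hTbound : ‖T‖ ≤ (L - μ) / 2 := by
    refine T.opNorm_le_of_abs_inner_le hT (by linarith) fun x ↦ abs_le.2 ?_
    have hx : ⟪T x, x⟫ = ⟪A x, x⟫ - (L + μ) / 2 * ‖x‖ ^ 2 := by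
      simp [T, inner_sub_left, real_inner_smul_left]
    rw [hx]
    constructor <;> linarith [h x]
  calc ‖A‖ = ‖T + ((L + μ) / 2) • ContinuousLinearMap.id ℝ E‖ := by rw [sub_add_cancel]
    _ ≤ (L - μ) / 2 + (L + μ) / 2 * 1 := by
      grw [norm_add_le, hTbound, norm_smul, Real.norm_of_nonneg (by linarith : 0 ≤ (L + μ) / 2),
        ContinuousLinearMap.norm_id_le]
      linarith
    _ = L := by ring

theorem mul_norm_le_norm_apply_of_le_inner {H : E →L[ℝ] E} {μ : ℝ}
    (h : ∀ v, μ * ‖v‖ ^ 2 ≤ ⟪H v, v⟫) (v : E) : μ * ‖v‖ ≤ ‖H v‖ := by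
  rcases eq_or_ne v 0 with rfl | hv
  · simp
  refine le_of_mul_le_mul_right ?_ (norm_pos_iff.2 hv)
  calc μ * ‖v‖ * ‖v‖ = μ * ‖v‖ ^ 2 := by ring
    _ ≤ ⟪H v, v⟫ := h v
    _ ≤ ‖H v‖ * ‖v‖ := real_inner_le_norm _ _

variable [CompleteSpace E] {F : E → ℝ}

theorem IsLocalMin.gradient_eq_zero {x : E} (h : IsLocalMin F x) : gradient F x = 0 := by
  simp [gradient, h.fderiv_eq_zero]

theorem ContDiff.gradient {n : WithTop ℕ∞} (hF : ContDiff ℝ (n + 1) F) :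
    ContDiff ℝ n (gradient F) :=
  (InnerProductSpace.toDual ℝ E).symm.contDiff.comp (hF.fderiv_right le_rfl)

theorem inner_fderiv_gradient_apply (x u v : E) :
    ⟪fderiv ℝ (gradient F) x u, v⟫ = fderiv ℝ (fderiv ℝ F) x u v := by
  have : gradient F = (InnerProductSpace.toDual ℝ E).symm ∘ fderiv ℝ F := rfl
  rw [this, LinearIsometryEquiv.comp_fderiv]
  exact InnerProductSpace.toDual_symm_apply

theorem isSymmetric_fderiv_gradient (hF : ContDiff ℝ 2 F) (x : E) :
    (fderiv ℝ (gradient F) x : E →ₗ[ℝ] E).IsSymmetric := fun u v ↦ by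
  show ⟪fderiv ℝ (gradient F) x u, v⟫ = ⟪u, fderiv ℝ (gradient F) x v⟫
  rw [real_inner_comm _ u, inner_fderiv_gradient_apply, inner_fderiv_gradient_apply,
    (hF.contDiffAt.isSymmSndFDerivAt (by simp)).eq]

end InnerProduct

theorem stmt_16_general {d : ℕ} (F : EuclideanSpace ℝ (Fin d) → ℝ)
    (M μ L μβ Lβ ζ : ℝ) (hμ : 0 < μ) (hμL : μ ≤ L)
    (hμβ : 0 < μβ) (hζ : ζ ∈ Set.Ioo (0 : ℝ) 1)
    (hF : ContDiff ℝ 2 F)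
    (hLip : ∀ w z, ‖fderiv ℝ (gradient F) w - fderiv ℝ (gradient F) z‖ ≤ M * ‖w - z‖)
    (hHess : ∀ w v, μ * ‖v‖ ^ 2 ≤ ⟪fderiv ℝ (gradient F) w v, v⟫ ∧
      ⟪fderiv ℝ (gradient F) w v, v⟫ ≤ L * ‖v‖ ^ 2)
    (wstar : EuclideanSpace ℝ (Fin d)) (hmin : ∀ z, F wstar ≤ F z)
    (H : EuclideanSpace ℝ (Fin d) →L[ℝ] EuclideanSpace ℝ (Fin d))
    (hHb : ∀ v, μβ * ‖v‖ ^ 2 ≤ ⟪H v, v⟫ ∧ ⟪H v, v⟫ ≤ Lβ * ‖v‖ ^ 2)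
    (w p wplus : EuclideanSpace ℝ (Fin d))
    (hres : ‖H p + gradient F w‖ ≤ ζ * ‖gradient F w‖)
    (hstep : wplus = w + p) :
    ‖wplus - wstar‖ ≤ M / (2 * μβ) * ‖w - wstar‖ ^ 2
      + 1 / μβ * ‖H (w - wstar) - fderiv ℝ (gradient F) w (w - wstar)‖
      + ζ * L / μβ * ‖w - wstar‖ := by
  set A := fderiv ℝ (gradient F)
  set e := w - wstar
  have hgrad : ∀ x, HasFDerivAt (gradient F) (A x) x := fun x ↦
    (hF.gradient.differentiable one_ne_zero x).hasFDerivAt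
  have hgrad_min : gradient F wstar = 0 := IsLocalMin.gradient_eq_zero (.of_forall hmin)
  have hgrad_w : ‖gradient F w‖ ≤ L * ‖e‖ := by
    simpa [hgrad_min] using convex_univ.norm_image_sub_le_of_norm_fderiv_le
      (fun x _ ↦ (hgrad x).differentiableAt)
      (fun x _ ↦ ContinuousLinearMap.opNorm_le_of_inner_le
        (isSymmetric_fderiv_gradient hF x) hμ.le hμL (hHess x))
      (Set.mem_univ wstar) (Set.mem_univ w)
  have htaylor : ‖A w e - gradient F w‖ ≤ M / 2 * ‖e‖ ^ 2 := by
    have := norm_sub_sub_fderiv_le_of_lipschitz hgrad (fun x ↦ hLip x w) wstar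
    rwa [hgrad_min, ← neg_sub w wstar, map_neg, zero_sub, sub_neg_eq_add, neg_add_eq_sub,
      norm_neg] at this
  have hsplit : H (wplus - wstar) =
      (H p + gradient F w) + (H e - A w e) + (A w e - gradient F w) := by
    rw [hstep, add_sub_right_comm, map_add]; abel
  have key : μβ * ‖wplus - wstar‖ ≤ M / 2 * ‖e‖ ^ 2 + ‖H e - A w e‖ + ζ * L * ‖e‖ :=
    calc μβ * ‖wplus - wstar‖ ≤ ‖H (wplus - wstar)‖ :=
          mul_norm_le_norm_apply_of_le_inner (fun v ↦ (hHb v).1) _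
      _ ≤ ζ * ‖gradient F w‖ + ‖H e - A w e‖ + M / 2 * ‖e‖ ^ 2 := by
          grw [hsplit, norm_add₃_le, hres, htaylor]
      _ ≤ M / 2 * ‖e‖ ^ 2 + ‖H e - A w e‖ + ζ * L * ‖e‖ := by
          linarith [mul_le_mul_of_nonneg_left hgrad_w hζ.1.le]
  calc ‖wplus - wstar‖ ≤ (M / 2 * ‖e‖ ^ 2 + ‖H e - A w e‖ + ζ * L * ‖e‖) / μβ :=
        (le_div_iff₀' hμβ).2 key
    _ = _ := by ring

theorem stmt_16 {d : ℕ} (F : EuclideanSpace ℝ (Fin d) → ℝ)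
    (M μ L μβ Lβ ζ : ℝ) (hM : 0 < M) (hμ : 0 < μ) (hμL : μ ≤ L)
    (hμβ : 0 < μβ) (hβ : μβ ≤ Lβ) (hζ : ζ ∈ Set.Ioo (0 : ℝ) 1)
    (hF : ContDiff ℝ 2 F)
    (hLip : ∀ w z, ‖fderiv ℝ (gradient F) w - fderiv ℝ (gradient F) z‖ ≤ M * ‖w - z‖)
    (hHess : ∀ w v, μ * ‖v‖ ^ 2 ≤ ⟪fderiv ℝ (gradient F) w v, v⟫ ∧
      ⟪fderiv ℝ (gradient F) w v, v⟫ ≤ L * ‖v‖ ^ 2)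
    (wstar : EuclideanSpace ℝ (Fin d)) (hmin : ∀ z, F wstar ≤ F z)
    (H : EuclideanSpace ℝ (Fin d) →L[ℝ] EuclideanSpace ℝ (Fin d))
    (hsym : ∀ u v, ⟪H u, v⟫ = ⟪u, H v⟫)
    (hHb : ∀ v, μβ * ‖v‖ ^ 2 ≤ ⟪H v, v⟫ ∧ ⟪H v, v⟫ ≤ Lβ * ‖v‖ ^ 2)
    (w p wplus : EuclideanSpace ℝ (Fin d))
    (hres : ‖H p + gradient F w‖ ≤ ζ * ‖gradient F w‖)
    (hstep : wplus = w + p) :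
    ‖wplus - wstar‖ ≤ M / (2 * μβ) * ‖w - wstar‖ ^ 2
      + 1 / μβ * ‖H (w - wstar) - fderiv ℝ (gradient F) w (w - wstar)‖
      + ζ * L / μβ * ‖w - wstar‖ :=
  stmt_16_general F M μ L μβ Lβ ζ hμ hμL hμβ hζ hF hLip hHess wstar hmin H hHb w p wplus hres hstep
end
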